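/- arXiv:2103.02681 — 2 statements merged into one kernel-verified Lean document; each statement's English description precedes it below -/
import Mathlib

section
/- Let ε > 0 and λ > 0 with √λ > ε. Then: for every z ∈ [0, 2√λ − ε], the function q_{λ,z}(x) = (1/(2λ))(x − z)² + log(1 + |x|/ε) is increasing on [0, ∞); for every z ∈ [2√λ − ε, λ/ε], q_{λ,z} is increasing on [0, r₁(z)], decreasing on [r₁(z), r₂(z)], and increasing on [r₂(z), ∞); and for every z ∈ [λ/ε, ∞), q_{λ,z} is decreasing on [0, r₂(z)] and increasing on [r₂(z), ∞). -/
open Real Filter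

/-- The scalar log-sum penalty `g(w) = log(1 + |w|/ε)`. -/
noncomputable def logpen (ε : ℝ) (w : ℝ) : ℝ := Real.log (1 + |w| / ε)

/-- The objective `q_{λ,z}(x) = (1/(2λ))(x − z)² + g(x)`. -/
noncomputable def qfun (lam ε z x : ℝ) : ℝ :=
  1 / (2 * lam) * (x - z) ^ 2 + logpen ε x

/-- The proximity operator of `λ g` at `z`: the set of global minimizers of `q_{λ,z}`. -/
def prox (lam ε z : ℝ) : Set ℝ := {x | ∀ y : ℝ, qfun lam ε z x ≤ qfun lam ε z y}

/-- `r₁(z) = (z − ε)/2 − √((z + ε)²/4 − λ)`. -/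
noncomputable def r1 (lam ε z : ℝ) : ℝ :=
  (z - ε) / 2 - Real.sqrt ((z + ε) ^ 2 / 4 - lam)

/-- `r₂(z) = (z − ε)/2 + √((z + ε)²/4 − λ)`. -/
noncomputable def r2 (lam ε z : ℝ) : ℝ :=
  (z - ε) / 2 + Real.sqrt ((z + ε) ^ 2 / 4 - lam)

/-- `r(z) = q_{λ,z}(r₂(z)) − q_{λ,z}(0)`. -/
noncomputable def rfun (lam ε z : ℝ) : ℝ :=
  qfun lam ε z (r2 lam ε z) - qfun lam ε z 0

/-- The iteratively reweighted ℓ₁ iteration for `prox_{λ g}(z)`. -/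
def IterRW (lam ε z : ℝ) (x : ℕ → ℝ) : Prop :=
  ∀ k : ℕ, x (k + 1) =
    if |z| ≤ lam / (ε + |x k|) then 0
    else Real.sign z * (|z| - lam / (ε + |x k|))

/-! For `x > 0` the derivative of `q_{λ,z}` is `((x - z)(x + ε) + λ) / (λ(ε + x))`, so its sign is
that of the monic quadratic `(x - z)(x + ε) + λ`, whose discriminant is `(z + ε)² - 4λ` and whose
roots, when real, are `r₁(z) ≤ r₂(z)`. For `z < 2√λ - ε` the quadratic has no real root; otherwise
`r₁ r₂ = λ - zε` and `r₁ + r₂ = z - ε`, so `0 ≤ r₁` exactly when `z ≤ λ/ε` (given `z > ε`), while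
`r₁ ≤ 0 ≤ r₂` for `z ≥ λ/ε`. At `z = 2√λ - ε` the two roots coincide and the two increasing pieces
glue together. -/

open Set

lemma strictMonoOn_Ici_of_Icc_of_Ici {α β : Type*} [LinearOrder α] [Preorder β] {f : α → β}
    {a b : α} (hab : a ≤ b) (h₁ : StrictMonoOn f (Icc a b)) (h₂ : StrictMonoOn f (Ici b)) :
    StrictMonoOn f (Ici a) := by
  simpa [Icc_union_Ici_eq_Ici hab] using h₁.union h₂ (isGreatest_Icc hab) isLeast_Ici

noncomputable def qfunNumer (lam ε z x : ℝ) : ℝ := (x - z) * (x + ε) + lam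

section Derivative

variable {lam ε z : ℝ}

lemma continuous_qfun (hε : 0 < ε) : Continuous (qfun lam ε z) := by
  unfold qfun logpen
  fun_prop (disch := intro x; positivity)

lemma hasDerivAt_qfun (hε : 0 < ε) (hlam : 0 < lam) {x : ℝ} (hx : 0 < x) :
    HasDerivAt (qfun lam ε z) (qfunNumer lam ε z x / (lam * (ε + x))) x := by
  have hlog : HasDerivAt (fun y ↦ log (1 + y / ε)) (1 / ε / (1 + x / ε)) x :=
    (((hasDerivAt_id x).div_const ε).const_add 1).log (by positivity)
  have hq := ((((hasDerivAt_id x).sub_const z).pow 2).const_mul (1 / (2 * lam))).add hlog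
  have hqfun : qfun lam ε z =ᶠ[nhds x] fun y ↦ 1 / (2 * lam) * (id y - z) ^ 2 + log (1 + y / ε) := by
    filter_upwards [Ioi_mem_nhds hx] with y hy
    simp [qfun, logpen, abs_of_pos (mem_Ioi.mp hy)]
  refine (hq.congr_of_eventuallyEq hqfun).congr_deriv ?_
  simp only [qfunNumer, id]
  field_simp
  ring

lemma strictMonoOn_qfun_of_numer_pos (hε : 0 < ε) (hlam : 0 < lam) {s : Set ℝ}
    (hs : Convex ℝ s) (hs0 : s ⊆ Ici 0) (hpos : ∀ x ∈ interior s, 0 < qfunNumer lam ε z x) :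
    StrictMonoOn (qfun lam ε z) s := by
  have hx0 : ∀ x ∈ interior s, 0 < x := fun x hx ↦ by
    simpa using interior_mono hs0 hx
  refine strictMonoOn_of_hasDerivWithinAt_pos hs (continuous_qfun hε).continuousOn
    (fun x hx ↦ (hasDerivAt_qfun hε hlam (hx0 x hx)).hasDerivWithinAt) fun x hx ↦ ?_
  have := hx0 x hx
  exact div_pos (hpos x hx) (by positivity)

lemma strictAntiOn_qfun_of_numer_neg (hε : 0 < ε) (hlam : 0 < lam) {s : Set ℝ}
    (hs : Convex ℝ s) (hs0 : s ⊆ Ici 0) (hneg : ∀ x ∈ interior s, qfunNumer lam ε z x < 0) :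
    StrictAntiOn (qfun lam ε z) s := by
  have hx0 : ∀ x ∈ interior s, 0 < x := fun x hx ↦ by
    simpa using interior_mono hs0 hx
  refine strictAntiOn_of_hasDerivWithinAt_neg hs (continuous_qfun hε).continuousOn
    (fun x hx ↦ (hasDerivAt_qfun hε hlam (hx0 x hx)).hasDerivWithinAt) fun x hx ↦ ?_
  have := hx0 x hx
  exact div_neg_of_neg_of_pos (hneg x hx) (by positivity)

end Derivative

section Roots

variable {lam ε z : ℝ}

lemma qfunNumer_pos (hD : (z + ε) ^ 2 < 4 * lam) (x : ℝ) : 0 < qfunNumer lam ε z x := by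
  unfold qfunNumer
  nlinarith [sq_nonneg (2 * x - z + ε)]

lemma qfunNumer_eq_mul (hD : 4 * lam ≤ (z + ε) ^ 2) (x : ℝ) :
    qfunNumer lam ε z x = (x - r1 lam ε z) * (x - r2 lam ε z) := by
  unfold qfunNumer r1 r2
  linear_combination Real.sq_sqrt (by linarith : 0 ≤ (z + ε) ^ 2 / 4 - lam)

lemma four_mul_le_sq_of_two_sqrt_sub_le (hlam : 0 ≤ lam) (hz : 2 * √lam - ε ≤ z) :
    4 * lam ≤ (z + ε) ^ 2 := by
  nlinarith [Real.sq_sqrt hlam, Real.sqrt_nonneg lam]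

lemma r1_le_r2 : r1 lam ε z ≤ r2 lam ε z := by
  unfold r1 r2
  linarith [Real.sqrt_nonneg ((z + ε) ^ 2 / 4 - lam)]

lemma r1_eq_r2 (hD : (z + ε) ^ 2 = 4 * lam) : r1 lam ε z = r2 lam ε z := by
  simp [r1, r2, hD]

lemma r1_nonneg (hεz : ε ≤ z) (hz : z * ε ≤ lam) : 0 ≤ r1 lam ε z := by
  have : √((z + ε) ^ 2 / 4 - lam) ≤ (z - ε) / 2 :=
    Real.sqrt_le_iff.mpr ⟨by linarith, by nlinarith⟩
  unfold r1
  linarith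

lemma r1_nonpos_and_r2_nonneg (hz : lam ≤ z * ε) : r1 lam ε z ≤ 0 ∧ 0 ≤ r2 lam ε z := by
  have h := Real.abs_le_sqrt (x := (z - ε) / 2) (y := (z + ε) ^ 2 / 4 - lam) (by nlinarith)
  unfold r1 r2
  constructor <;> linarith [le_abs_self ((z - ε) / 2), neg_abs_le ((z - ε) / 2)]

end Roots

section Monotonicity

variable {lam ε z : ℝ}

lemma strictMonoOn_qfun_Ici_zero_of_sq_lt (hε : 0 < ε) (hlam : 0 < lam)
    (hD : (z + ε) ^ 2 < 4 * lam) : StrictMonoOn (qfun lam ε z) (Ici 0) :=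
  strictMonoOn_qfun_of_numer_pos hε hlam (convex_Ici 0) subset_rfl
    fun x _ ↦ qfunNumer_pos hD x

lemma strictMonoOn_qfun_Icc_zero_r1 (hε : 0 < ε) (hlam : 0 < lam)
    (hD : 4 * lam ≤ (z + ε) ^ 2) : StrictMonoOn (qfun lam ε z) (Icc 0 (r1 lam ε z)) := by
  refine strictMonoOn_qfun_of_numer_pos hε hlam (convex_Icc _ _) Icc_subset_Ici_self ?_
  intro x hx
  rw [interior_Icc] at hx
  rw [qfunNumer_eq_mul hD]
  have := r1_le_r2 (lam := lam) (ε := ε) (z := z)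
  exact mul_pos_of_neg_of_neg (by linarith [hx.2]) (by linarith [hx.2])

lemma strictAntiOn_qfun_Icc_r1_r2 (hε : 0 < ε) (hlam : 0 < lam)
    (hD : 4 * lam ≤ (z + ε) ^ 2) (hr1 : 0 ≤ r1 lam ε z) :
    StrictAntiOn (qfun lam ε z) (Icc (r1 lam ε z) (r2 lam ε z)) := by
  refine strictAntiOn_qfun_of_numer_neg hε hlam (convex_Icc _ _) (fun x hx ↦ hr1.trans hx.1) ?_
  intro x hx
  rw [interior_Icc] at hx
  rw [qfunNumer_eq_mul hD]
  exact mul_neg_of_pos_of_neg (by linarith [hx.1]) (by linarith [hx.2])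

lemma strictAntiOn_qfun_Icc_zero_r2 (hε : 0 < ε) (hlam : 0 < lam)
    (hD : 4 * lam ≤ (z + ε) ^ 2) (hr1 : r1 lam ε z ≤ 0) :
    StrictAntiOn (qfun lam ε z) (Icc 0 (r2 lam ε z)) := by
  refine strictAntiOn_qfun_of_numer_neg hε hlam (convex_Icc _ _) Icc_subset_Ici_self ?_
  intro x hx
  rw [interior_Icc] at hx
  rw [qfunNumer_eq_mul hD]
  exact mul_neg_of_pos_of_neg (by linarith [hx.1]) (by linarith [hx.2])

lemma strictMonoOn_qfun_Ici_r2 (hε : 0 < ε) (hlam : 0 < lam)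
    (hD : 4 * lam ≤ (z + ε) ^ 2) (hr2 : 0 ≤ r2 lam ε z) :
    StrictMonoOn (qfun lam ε z) (Ici (r2 lam ε z)) := by
  refine strictMonoOn_qfun_of_numer_pos hε hlam (convex_Ici _) (Ici_subset_Ici.mpr hr2) ?_
  intro x hx
  rw [interior_Ici] at hx
  rw [qfunNumer_eq_mul hD]
  have := r1_le_r2 (lam := lam) (ε := ε) (z := z)
  exact mul_pos (by linarith [mem_Ioi.mp hx]) (by linarith [mem_Ioi.mp hx])

end Monotonicity

/-- monotonicity of `q_{λ,z}` when `√λ > ε`. -/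
theorem qfun_monotonicity_sqrt_gt (ε lam : ℝ) (hε : 0 < ε) (hlam : 0 < lam)
    (h : ε < Real.sqrt lam) :
    (∀ z ∈ Set.Icc (0 : ℝ) (2 * Real.sqrt lam - ε),
      StrictMonoOn (qfun lam ε z) (Set.Ici 0)) ∧
    (∀ z ∈ Set.Icc (2 * Real.sqrt lam - ε) (lam / ε),
      StrictMonoOn (qfun lam ε z) (Set.Icc 0 (r1 lam ε z)) ∧
      StrictAntiOn (qfun lam ε z) (Set.Icc (r1 lam ε z) (r2 lam ε z)) ∧
      StrictMonoOn (qfun lam ε z) (Set.Ici (r2 lam ε z))) ∧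
    (∀ z ∈ Set.Ici (lam / ε),
      StrictAntiOn (qfun lam ε z) (Set.Icc 0 (r2 lam ε z)) ∧
      StrictMonoOn (qfun lam ε z) (Set.Ici (r2 lam ε z))) := by
  have hsq := Real.sq_sqrt hlam.le
  have middle : ∀ z ∈ Icc (2 * √lam - ε) (lam / ε),
      StrictMonoOn (qfun lam ε z) (Icc 0 (r1 lam ε z)) ∧
      StrictAntiOn (qfun lam ε z) (Icc (r1 lam ε z) (r2 lam ε z)) ∧
      StrictMonoOn (qfun lam ε z) (Ici (r2 lam ε z)) := fun z ⟨hz₁, hz₂⟩ ↦ by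
    have hD := four_mul_le_sq_of_two_sqrt_sub_le hlam.le hz₁
    have hr1 := r1_nonneg (by linarith) ((le_div_iff₀ hε).mp hz₂)
    exact ⟨strictMonoOn_qfun_Icc_zero_r1 hε hlam hD, strictAntiOn_qfun_Icc_r1_r2 hε hlam hD hr1,
      strictMonoOn_qfun_Ici_r2 hε hlam hD (hr1.trans r1_le_r2)⟩
  refine ⟨fun z ⟨hz₀, hz⟩ ↦ ?_, middle, fun z hz ↦ ?_⟩
  · rcases hz.lt_or_eq with hlt | rfl
    · exact strictMonoOn_qfun_Ici_zero_of_sq_lt hε hlam (by nlinarith [Real.sqrt_nonneg lam])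
    · have hz₂ : 2 * √lam - ε ≤ lam / ε := by
        rw [le_div_iff₀ hε]
        nlinarith [sq_nonneg (√lam - ε)]
      obtain ⟨hmono₁, -, hmono₂⟩ := middle _ ⟨le_rfl, hz₂⟩
      rw [← r1_eq_r2 (by ring_nf; linarith)] at hmono₂
      exact strictMonoOn_Ici_of_Icc_of_Ici (r1_nonneg (by linarith) ((le_div_iff₀ hε).mp hz₂))
        hmono₁ hmono₂
  · have hz' : lam ≤ z * ε := (div_le_iff₀ hε).mp hz
    have hD : 4 * lam ≤ (z + ε) ^ 2 := by nlinarith [sq_nonneg (z - ε)]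
    obtain ⟨hr1, hr2⟩ := r1_nonpos_and_r2_nonneg hz'
    exact ⟨strictAntiOn_qfun_Icc_zero_r2 hε hlam hD hr1, strictMonoOn_qfun_Ici_r2 hε hlam hD hr2⟩
end

section
/- Let ε > 0 and λ > 0 satisfy 2√λ − ε > 0 and √λ ≤ ε. Let z ∈ [2√λ − ε, λ/ε), and let the sequence (x^{(k)})_{k≥0} be generated by the reweighted ℓ₁ iteration from any initial guess x^{(0)} ≥ 0. Then the sequence (x^{(k)}) converges to 0. -/
/-!
The magnitudes obey the scalar recursion `|x⁽ᵏ⁺¹⁾| = max 0 (|z| − λ/(ε + |x⁽ᵏ⁾|))`. When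
`|z| ≤ ε` and `ε|z| < λ`, this map lies strictly below the identity on `(0, ∞)`, since
`(|z| − w)(ε + w) ≤ ε|z| < λ` for `w ≥ 0`. So the magnitudes decrease to a limit which, by
continuity, is a fixed point in `[0, ∞)`, and the only one is `0`. For `z ∈ [2√λ − ε, λ/ε)`
we have `0 < z < λ/ε ≤ ε`, because `λ ≤ ε²`.
-/

open Real Filter

open Topology Function

theorem tendsto_iterate_zero_of_le_self {f : ℝ → ℝ} (hmaps : ∀ w, 0 ≤ w → 0 ≤ f w)
    (hle : ∀ w, 0 ≤ w → f w ≤ w) (hfix : ∀ w, 0 < w → f w ≠ w)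
    (hf : ∀ w, 0 ≤ w → ContinuousAt f w) {w : ℝ} (hw : 0 ≤ w) :
    Tendsto (fun n => f^[n] w) atTop (𝓝 0) := by
  have hnonneg : ∀ n, 0 ≤ f^[n] w := by
    intro n
    induction n with
    | zero => exact hw
    | succ n ih => rw [iterate_succ_apply']; exact hmaps _ ih
  have hanti : Antitone fun n => f^[n] w := antitone_nat_of_succ_le fun n => by
    rw [iterate_succ_apply']; exact hle _ (hnonneg n)
  have hlim := tendsto_atTop_ciInf hanti ⟨0, by rintro _ ⟨n, rfl⟩; exact hnonneg n⟩
  have hL : 0 ≤ ⨅ n, f^[n] w := le_ciInf hnonneg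
  have hfixed : IsFixedPt f (⨅ n, f^[n] w) := isFixedPt_of_tendsto_iterate hlim (hf _ hL)
  obtain hpos | hzero := hL.lt_or_eq
  · exact absurd hfixed (hfix _ hpos)
  · rwa [← hzero] at hlim

noncomputable def rwStep (lam ε c w : ℝ) : ℝ := max 0 (c - lam / (ε + w))

section rwStep

variable {lam ε c w : ℝ}

theorem rwStep_nonneg : 0 ≤ rwStep lam ε c w := le_max_left _ _

theorem sub_div_add_lt_self (hε : 0 < ε) (hcε : c ≤ ε) (hclam : ε * c < lam) (hw : 0 ≤ w) :
    c - lam / (ε + w) < w := by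
  have hd : 0 < ε + w := by linarith
  rw [sub_lt_comm, lt_div_iff₀ hd]
  nlinarith

theorem rwStep_le_self (hε : 0 < ε) (hcε : c ≤ ε) (hclam : ε * c < lam) (hw : 0 ≤ w) :
    rwStep lam ε c w ≤ w :=
  max_le hw (sub_div_add_lt_self hε hcε hclam hw).le

theorem rwStep_lt_self (hε : 0 < ε) (hcε : c ≤ ε) (hclam : ε * c < lam) (hw : 0 < w) :
    rwStep lam ε c w < w :=
  max_lt hw (sub_div_add_lt_self hε hcε hclam hw.le)

theorem continuousAt_rwStep (hε : 0 < ε) (hw : 0 ≤ w) : ContinuousAt (rwStep lam ε c) w :=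
  continuousAt_const.max <| continuousAt_const.sub <|
    continuousAt_const.div (by fun_prop) (by positivity)

end rwStep

section IterRW

variable {lam ε z : ℝ} {x : ℕ → ℝ}

theorem IterRW.abs_succ (hlam : 0 ≤ lam) (hε : 0 ≤ ε) (hx : IterRW lam ε z x) (k : ℕ) :
    |x (k + 1)| = rwStep lam ε |z| |x k| := by
  have ht : 0 ≤ lam / (ε + |x k|) := by positivity
  rw [hx k, rwStep]
  split_ifs with hz
  · rw [abs_zero, max_eq_left (sub_nonpos.2 hz)]
  · replace hz := not_le.1 hz
    have hz0 : z ≠ 0 := abs_pos.1 (ht.trans_lt hz)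
    have hsign : |Real.sign z| = 1 := by
      rcases Real.sign_apply_eq_of_ne_zero z hz0 with h | h <;> simp [h]
    rw [abs_mul, hsign, one_mul, abs_of_pos (sub_pos.2 hz), max_eq_right (sub_pos.2 hz).le]

theorem IterRW.abs_eq_iterate (hlam : 0 ≤ lam) (hε : 0 ≤ ε) (hx : IterRW lam ε z x) (k : ℕ) :
    |x k| = (rwStep lam ε |z|)^[k] |x 0| := by
  induction k with
  | zero => rfl
  | succ k ih => rw [iterate_succ_apply', ← ih, hx.abs_succ hlam hε]

theorem IterRW.tendsto_zero (hε : 0 < ε) (hzε : |z| ≤ ε) (hzlam : ε * |z| < lam)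
    (hx : IterRW lam ε z x) : Tendsto x atTop (𝓝 0) := by
  have hlam : 0 ≤ lam := (by positivity : 0 ≤ ε * |z|).trans hzlam.le
  rw [tendsto_zero_iff_abs_tendsto_zero]
  refine .congr (fun k => (hx.abs_eq_iterate hlam hε.le k).symm) <|
    tendsto_iterate_zero_of_le_self (fun _ _ => rwStep_nonneg)
    (fun _ => rwStep_le_self hε hzε hzlam) (fun _ hw => (rwStep_lt_self hε hzε hzlam hw).ne)
    (fun _ => continuousAt_rwStep hε) (abs_nonneg _)

end IterRW

theorem iterRW_conv_mid_z_convex_general (ε lam z : ℝ) (hε : 0 < ε)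
    (h2 : 0 < 2 * Real.sqrt lam - ε) (h : Real.sqrt lam ≤ ε)
    (hz : z ∈ Set.Ico (2 * Real.sqrt lam - ε) (lam / ε))
    (x : ℕ → ℝ) (hiter : IterRW lam ε z x) :
    Filter.Tendsto x Filter.atTop (nhds 0) := by
  obtain ⟨hz_ge, hz_lt⟩ := hz
  have hz_abs : |z| = z := abs_of_pos (h2.trans_le hz_ge)
  have hlam_le : lam ≤ ε ^ 2 := (Real.sqrt_le_left hε.le).1 h
  have hzε : z < ε := hz_lt.trans_le <| (div_le_iff₀ hε).2 (by nlinarith)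
  have hzlam : ε * z < lam := by rwa [lt_div_iff₀ hε, mul_comm] at hz_lt
  exact hiter.tendsto_zero hε (hz_abs.symm ▸ hzε.le) (hz_abs.symm ▸ hzlam)

/-- for `√λ ≤ ε` and `z ∈ [2√λ − ε, λ/ε)`, the reweighted ℓ₁
sequence converges to 0. -/
theorem iterRW_conv_mid_z_convex (ε lam z : ℝ) (hε : 0 < ε) (hlam : 0 < lam)
    (h2 : 0 < 2 * Real.sqrt lam - ε) (h : Real.sqrt lam ≤ ε)
    (hz : z ∈ Set.Ico (2 * Real.sqrt lam - ε) (lam / ε))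
    (x : ℕ → ℝ) (hx0 : 0 ≤ x 0) (hiter : IterRW lam ε z x) :
    Filter.Tendsto x Filter.atTop (nhds 0) :=
  iterRW_conv_mid_z_convex_general ε lam z hε h2 h hz x hiter
end
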